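/- Let $f_1, f_2$ be nonzero homogeneous polynomials in disjoint sets of variables such that $f_i^\perp$ is generated in degrees at most $\delta_i$ ($i = 1,2$). Then the apolar ideal of $t = f_1 f_2$ in $\mathrm{Sym}^\bullet(V_1^* \oplus V_2^*)$ is generated by elements of bidegree $(\delta, 0)$ with $\delta \leq \delta_1$ or $(0, \delta)$ with $\delta \leq \delta_2$. -/

import Mathlib

open MvPolynomial

lemma pderiv_comm' {σ : Type*} [DecidableEq σ] (i j : σ) (f : MvPolynomial σ ℂ) :
    pderiv i (pderiv j f) = pderiv j (pderiv i f) := by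
  induction f using MvPolynomial.induction_on with
  | C a => simp
  | add p q hp hq => simp [hp, hq]
  | mul_X p k hp =>
      simp only [pderiv_mul, map_add, hp, pderiv_X, Pi.single_apply]
      split_ifs <;> simp <;> ring

/-- The apolarity action: the algebra homomorphism from the polynomial ring in the
dual variables to endomorphisms of the polynomial ring, sending each dual variable to
the corresponding partial derivative. -/
noncomputable def diffHom (σ : Type*) [DecidableEq σ] :
    MvPolynomial σ ℂ →ₐ[ℂ] Module.End ℂ (MvPolynomial σ ℂ) :=
  letI s : Set (Module.End ℂ (MvPolynomial σ ℂ)) :=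
    Set.range fun i : σ => ((pderiv i : Derivation ℂ _ _) : MvPolynomial σ ℂ →ₗ[ℂ] MvPolynomial σ ℂ)
  letI hcomm : ∀ a ∈ s, ∀ b ∈ s, a * b = b * a := by
    rintro _ ⟨i, rfl⟩ _ ⟨j, rfl⟩
    exact LinearMap.ext fun f => pderiv_comm' i j f
  letI : CommSemiring (Algebra.adjoin ℂ s) := Algebra.adjoinCommSemiringOfComm ℂ hcomm
  (Algebra.adjoin ℂ s).val.comp
    (aeval fun i : σ => (⟨_, Algebra.subset_adjoin ⟨i, rfl⟩⟩ : Algebra.adjoin ℂ s))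

/-- The apolar ideal of a polynomial: the annihilator under the apolarity action. -/
noncomputable def apolarIdeal {σ : Type*} [DecidableEq σ] (f : MvPolynomial σ ℂ) :
    Ideal (MvPolynomial σ ℂ) where
  carrier := {D | diffHom σ D f = 0}
  zero_mem' := by simp
  add_mem' := by
    intro a b ha hb
    simp only [Set.mem_setOf_eq, map_add, LinearMap.add_apply] at *
    rw [ha, hb, add_zero]
  smul_mem' := by
    intro c x hx
    simp only [Set.mem_setOf_eq, smul_eq_mul, map_mul, Module.End.mul_apply] at *
    rw [hx, map_zero]

lemma mem_apolarIdeal_iff {σ : Type*} [DecidableEq σ] (f D : MvPolynomial σ ℂ) :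
    D ∈ apolarIdeal f ↔ diffHom σ D f = 0 := Iff.rfl

/-!
Under `MvPolynomial.tensorEquivSum`, `ℂ[σ ⊕ τ] ≃ ℂ[σ] ⊗ ℂ[τ]`, the apolarity action on
`f₁ f₂` becomes the tensor product of the maps `D ↦ D ⌟ f₁` and `D ↦ D ⌟ f₂`. Over a field the
kernel of `φ₁ ⊗ φ₂` is `ker φ₁ ⊗ B + A ⊗ ker φ₂` (factor each map through its range: tensoring
injective maps stays injective, and right exactness computes the kernel of the surjective part).
Hence `(f₁ f₂)^⊥ = f₁^⊥ ℂ[σ ⊕ τ] + f₂^⊥ ℂ[σ ⊕ τ]`, which is generated by the images of generators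
of `f₁^⊥` and `f₂^⊥`.
-/

open TensorProduct LinearMap

theorem TensorProduct.ker_map_of_field {K M M' N N' : Type*} [Field K]
    [AddCommGroup M] [Module K M] [AddCommGroup M'] [Module K M']
    [AddCommGroup N] [Module K N] [AddCommGroup N'] [Module K N']
    (f : M →ₗ[K] M') (g : N →ₗ[K] N') :
    ker (map f g) = range (lTensor M (ker g).subtype) ⊔ range (rTensor N (ker f).subtype) := by
  have hf : Function.Exact (ker f).subtype f.rangeRestrict :=
    exact_iff.2 (by rw [ker_rangeRestrict, Submodule.range_subtype])
  have hg : Function.Exact (ker g).subtype g.rangeRestrict :=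
    exact_iff.2 (by rw [ker_rangeRestrict, Submodule.range_subtype])
  have hfactor : map f g =
      map (range f).subtype (range g).subtype ∘ₗ map f.rangeRestrict g.rangeRestrict := by
    rw [← map_comp]; rfl
  rw [hfactor, ker_comp_of_ker_eq_bot _ (ker_eq_bot.2 (map_injective_of_flat_flat _ _
      (range f).injective_subtype (range g).injective_subtype)),
    map_ker hf f.surjective_rangeRestrict hg g.surjective_rangeRestrict]

namespace MvPolynomial

section TensorEquivSum

variable {R σ τ : Type*} [CommSemiring R]

theorem tensorEquivSum_tmul (a : MvPolynomial σ R) (b : MvPolynomial τ R) :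
    tensorEquivSum R σ τ R (a ⊗ₜ b) = rename Sum.inl a * rename Sum.inr b := by
  have hl : (tensorEquivSum R σ τ R).toAlgHom.comp
      (Algebra.TensorProduct.includeLeft (S := R) (B := MvPolynomial τ R)) = rename Sum.inl :=
    algHom_ext fun i => by simp
  have hr : (tensorEquivSum R σ τ R).toAlgHom.comp
      (Algebra.TensorProduct.includeRight (A := MvPolynomial σ R)) = rename Sum.inr :=
    algHom_ext fun i => by simp
  rw [← hl, ← hr]
  simp [← map_mul]

theorem tensorEquivSum_mem_map_rename_inl {I : Ideal (MvPolynomial σ R)}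
    {y : MvPolynomial σ R ⊗[R] MvPolynomial τ R}
    (hy : y ∈ range (rTensor (MvPolynomial τ R) (I.restrictScalars R).subtype)) :
    tensorEquivSum R σ τ R y ∈ I.map (rename Sum.inl) := by
  obtain ⟨z, rfl⟩ := hy
  induction z using TensorProduct.induction_on with
  | zero => simp
  | tmul i b =>
    rw [rTensor_tmul, tensorEquivSum_tmul]
    exact Ideal.mul_mem_right _ _ (Ideal.mem_map_of_mem _ i.2)
  | add z z' hz hz' => rw [map_add, map_add]; exact Ideal.add_mem _ hz hz'

theorem tensorEquivSum_mem_map_rename_inr {I : Ideal (MvPolynomial τ R)}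
    {y : MvPolynomial σ R ⊗[R] MvPolynomial τ R}
    (hy : y ∈ range (lTensor (MvPolynomial σ R) (I.restrictScalars R).subtype)) :
    tensorEquivSum R σ τ R y ∈ I.map (rename Sum.inr) := by
  obtain ⟨z, rfl⟩ := hy
  induction z using TensorProduct.induction_on with
  | zero => simp
  | tmul a i =>
    rw [lTensor_tmul, tensorEquivSum_tmul]
    exact Ideal.mul_mem_left _ _ (Ideal.mem_map_of_mem _ i.2)
  | add z z' hz hz' => rw [map_add, map_add]; exact Ideal.add_mem _ hz hz'

end TensorEquivSum

theorem pderiv_inl_rename_inr {R σ τ : Type*} [CommSemiring R] [DecidableEq σ] [DecidableEq τ]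
    (i : σ) (q : MvPolynomial τ R) : pderiv (Sum.inl i : σ ⊕ τ) (rename Sum.inr q) = 0 :=
  pderiv_eq_zero_of_notMem_vars fun h => by simpa using vars_rename _ _ h

theorem pderiv_inr_rename_inl {R σ τ : Type*} [CommSemiring R] [DecidableEq σ] [DecidableEq τ]
    (j : τ) (p : MvPolynomial σ R) : pderiv (Sum.inr j : σ ⊕ τ) (rename Sum.inl p) = 0 :=
  pderiv_eq_zero_of_notMem_vars fun h => by simpa using vars_rename _ _ h

end MvPolynomial

section Apolarity

variable {σ τ : Type*} [DecidableEq σ] [DecidableEq τ]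

theorem diffHom_X (i : σ) (p : MvPolynomial σ ℂ) : diffHom σ (X i) p = pderiv i p := by
  simp [diffHom]

theorem diffHom_C (a : ℂ) (p : MvPolynomial σ ℂ) : diffHom σ (C a) p = a • p := by
  simp [diffHom]

theorem diffHom_mul_apply (a b p : MvPolynomial σ ℂ) :
    diffHom σ (a * b) p = diffHom σ a (diffHom σ b p) := by
  rw [map_mul, Module.End.mul_apply]

theorem diffHom_rename_inl_apply (g p : MvPolynomial σ ℂ) (q : MvPolynomial τ ℂ) :
    diffHom (σ ⊕ τ) (rename Sum.inl g) (rename Sum.inl p * rename Sum.inr q) =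
      rename Sum.inl (diffHom σ g p) * rename Sum.inr q := by
  induction g using MvPolynomial.induction_on generalizing p with
  | C a => rw [rename_C, diffHom_C, diffHom_C, map_smul, smul_mul_assoc]
  | add g g' hg hg' => simp only [map_add, LinearMap.add_apply, hg, hg', add_mul]
  | mul_X g i hg =>
    rw [map_mul (rename _), rename_X, diffHom_mul_apply, diffHom_X, pderiv_mul,
      pderiv_inl_rename_inr, mul_zero, add_zero, pderiv_rename Sum.inl_injective, hg, diffHom_mul_apply, diffHom_X]

theorem diffHom_rename_inr_apply (h q : MvPolynomial τ ℂ) (p : MvPolynomial σ ℂ) :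
    diffHom (σ ⊕ τ) (rename Sum.inr h) (rename Sum.inl p * rename Sum.inr q) =
      rename Sum.inl p * rename Sum.inr (diffHom τ h q) := by
  induction h using MvPolynomial.induction_on generalizing q with
  | C a => rw [rename_C, diffHom_C, diffHom_C, map_smul, mul_smul_comm]
  | add h h' hh hh' => simp only [map_add, LinearMap.add_apply, hh, hh', mul_add]
  | mul_X h j hh =>
    rw [map_mul (rename _), rename_X, diffHom_mul_apply, diffHom_X, pderiv_mul,
      pderiv_inr_rename_inl, zero_mul, zero_add, pderiv_rename Sum.inr_injective, hh, diffHom_mul_apply, diffHom_X]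

theorem diffHom_rename_inl_mul_rename_inr_apply (g p : MvPolynomial σ ℂ)
    (h q : MvPolynomial τ ℂ) :
    diffHom (σ ⊕ τ) (rename Sum.inl g * rename Sum.inr h) (rename Sum.inl p * rename Sum.inr q) =
      rename Sum.inl (diffHom σ g p) * rename Sum.inr (diffHom τ h q) := by
  rw [diffHom_mul_apply, diffHom_rename_inr_apply, diffHom_rename_inl_apply]

noncomputable def apolarMap (f : MvPolynomial σ ℂ) : MvPolynomial σ ℂ →ₗ[ℂ] MvPolynomial σ ℂ :=
  (diffHom σ).toLinearMap.flip f

theorem apolarMap_apply (f D : MvPolynomial σ ℂ) : apolarMap f D = diffHom σ D f := rfl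

theorem ker_apolarMap (f : MvPolynomial σ ℂ) :
    ker (apolarMap f) = (apolarIdeal f).restrictScalars ℂ := rfl

theorem diffHom_tensorEquivSum_apply (f₁ : MvPolynomial σ ℂ) (f₂ : MvPolynomial τ ℂ)
    (x : MvPolynomial σ ℂ ⊗[ℂ] MvPolynomial τ ℂ) :
    diffHom (σ ⊕ τ) (tensorEquivSum ℂ σ τ ℂ x) (rename Sum.inl f₁ * rename Sum.inr f₂) =
      tensorEquivSum ℂ σ τ ℂ (TensorProduct.map (apolarMap f₁) (apolarMap f₂) x) := by
  induction x using TensorProduct.induction_on with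
  | zero => simp
  | tmul g h =>
    rw [map_tmul, tensorEquivSum_tmul, tensorEquivSum_tmul,
      diffHom_rename_inl_mul_rename_inr_apply, apolarMap_apply, apolarMap_apply]
  | add x y hx hy => simp only [map_add, LinearMap.add_apply, hx, hy]

theorem apolarIdeal_rename_inl_mul_rename_inr (f₁ : MvPolynomial σ ℂ) (f₂ : MvPolynomial τ ℂ) :
    apolarIdeal (rename Sum.inl f₁ * rename Sum.inr f₂) =
      (apolarIdeal f₁).map (rename Sum.inl) ⊔ (apolarIdeal f₂).map (rename Sum.inr) := by
  refine le_antisymm (fun D hD => ?_) (sup_le ?_ ?_)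
  · obtain ⟨x, rfl⟩ := (tensorEquivSum ℂ σ τ ℂ).surjective D
    have hx : x ∈ ker (TensorProduct.map (apolarMap f₁) (apolarMap f₂)) := by
      rw [mem_ker, ← (tensorEquivSum ℂ σ τ ℂ).injective.eq_iff, map_zero,
        ← diffHom_tensorEquivSum_apply]
      exact hD
    rw [TensorProduct.ker_map_of_field, ker_apolarMap, ker_apolarMap] at hx
    obtain ⟨y₂, hy₂, y₁, hy₁, rfl⟩ := Submodule.mem_sup.1 hx
    rw [map_add, add_comm]
    exact Submodule.add_mem_sup (tensorEquivSum_mem_map_rename_inl hy₁)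
      (tensorEquivSum_mem_map_rename_inr hy₂)
  · rw [Ideal.map_le_iff_le_comap]
    intro g hg
    rw [Ideal.mem_comap, mem_apolarIdeal_iff, diffHom_rename_inl_apply, hg, map_zero, zero_mul]
  · rw [Ideal.map_le_iff_le_comap]
    intro h hh
    rw [Ideal.mem_comap, mem_apolarIdeal_iff, diffHom_rename_inr_apply, hh, map_zero, mul_zero]

end Apolarity

theorem apolarIdeal_mul_generated_in_low_bidegrees_general (m₁ m₂ δ₁ δ₂ : ℕ)
    (f₁ : MvPolynomial (Fin m₁) ℂ) (f₂ : MvPolynomial (Fin m₂) ℂ)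
    (hgen₁ : ∃ S : Set (MvPolynomial (Fin m₁) ℂ),
      (∀ g ∈ S, ∃ δ ≤ δ₁, g.IsHomogeneous δ) ∧ Ideal.span S = apolarIdeal f₁)
    (hgen₂ : ∃ S : Set (MvPolynomial (Fin m₂) ℂ),
      (∀ g ∈ S, ∃ δ ≤ δ₂, g.IsHomogeneous δ) ∧ Ideal.span S = apolarIdeal f₂) :
    ∃ S : Set (MvPolynomial (Fin m₁ ⊕ Fin m₂) ℂ),
      (∀ g ∈ S,
        (∃ δ ≤ δ₁, ∃ g₁ : MvPolynomial (Fin m₁) ℂ, g₁.IsHomogeneous δ ∧ g = rename Sum.inl g₁) ∨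
        (∃ δ ≤ δ₂, ∃ g₂ : MvPolynomial (Fin m₂) ℂ, g₂.IsHomogeneous δ ∧ g = rename Sum.inr g₂)) ∧
      Ideal.span S = apolarIdeal (rename Sum.inl f₁ * rename Sum.inr f₂) := by
  obtain ⟨S₁, hS₁deg, hS₁⟩ := hgen₁
  obtain ⟨S₂, hS₂deg, hS₂⟩ := hgen₂
  refine ⟨rename Sum.inl '' S₁ ∪ rename Sum.inr '' S₂, ?_, ?_⟩
  · rintro _ (⟨g, hg, rfl⟩ | ⟨g, hg, rfl⟩)
    · obtain ⟨δ, hδ, hhom⟩ := hS₁deg g hg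
      exact Or.inl ⟨δ, hδ, g, hhom, rfl⟩
    · obtain ⟨δ, hδ, hhom⟩ := hS₂deg g hg
      exact Or.inr ⟨δ, hδ, g, hhom, rfl⟩
  · rw [Ideal.span_union, ← Ideal.map_span, ← Ideal.map_span, hS₁, hS₂,
      apolarIdeal_rename_inl_mul_rename_inr]

/-- If the apolar ideals of nonzero homogeneous `f₁`, `f₂` (in disjoint sets of variables) are
generated in degrees at most `δ₁`, `δ₂` respectively, then the apolar ideal of `t = f₁ f₂` is
generated by elements of bidegree `(δ, 0)` with `δ ≤ δ₁` or `(0, δ)` with `δ ≤ δ₂`, i.e. by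
homogeneous elements depending only on the first (resp. second) set of variables. -/
theorem apolarIdeal_mul_generated_in_low_bidegrees (m₁ m₂ d₁ d₂ δ₁ δ₂ : ℕ)
    (f₁ : MvPolynomial (Fin m₁) ℂ) (f₂ : MvPolynomial (Fin m₂) ℂ)
    (hf₁ : f₁.IsHomogeneous d₁) (hf₂ : f₂.IsHomogeneous d₂)
    (hf₁0 : f₁ ≠ 0) (hf₂0 : f₂ ≠ 0)
    (hgen₁ : ∃ S : Set (MvPolynomial (Fin m₁) ℂ),
      (∀ g ∈ S, ∃ δ ≤ δ₁, g.IsHomogeneous δ) ∧ Ideal.span S = apolarIdeal f₁)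
    (hgen₂ : ∃ S : Set (MvPolynomial (Fin m₂) ℂ),
      (∀ g ∈ S, ∃ δ ≤ δ₂, g.IsHomogeneous δ) ∧ Ideal.span S = apolarIdeal f₂) :
    ∃ S : Set (MvPolynomial (Fin m₁ ⊕ Fin m₂) ℂ),
      (∀ g ∈ S,
        (∃ δ ≤ δ₁, ∃ g₁ : MvPolynomial (Fin m₁) ℂ, g₁.IsHomogeneous δ ∧ g = rename Sum.inl g₁) ∨
        (∃ δ ≤ δ₂, ∃ g₂ : MvPolynomial (Fin m₂) ℂ, g₂.IsHomogeneous δ ∧ g = rename Sum.inr g₂)) ∧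
      Ideal.span S = apolarIdeal (rename Sum.inl f₁ * rename Sum.inr f₂) :=
  apolarIdeal_mul_generated_in_low_bidegrees_general m₁ m₂ δ₁ δ₂ f₁ f₂ hgen₁ hgen₂
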